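/- If π is an optimal partition of an FA game and C¹,…,Cᵐ are pairwise distinct coalitions of π with m ≥ 2, then SW(C¹ ∪ … ∪ Cᵐ) ≤ SW(C¹) + … + SW(Cᵐ) (no positive cut property: merging any sub-collection of coalitions of an optimal partition does not increase social welfare). -/

import Mathlib

/-!
Merging a set `T` of coalitions of a partition into the single coalition `⋃ T` yields another
partition, whose welfare is that of the old one with `Σ_{C ∈ T} SW(C)` replaced by `SW(⋃ T)`.
Optimality of the old partition therefore gives `SW(⋃ T) ≤ Σ_{C ∈ T} SW(C)`.
-/

open Finset

/-- FA utility of agent `i` with friend set `t` for a coalition `C` containing her: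
`u_i(C) = |C ∩ F_i| − |C ∩ E_i| / n`, where `E_i = N \ (F_i ∪ {i})`. -/
def faUtil (n : ℕ) (t : Finset (Fin n)) (i : Fin n) (C : Finset (Fin n)) : ℚ :=
  ((C ∩ t).card : ℚ) - ((C \ (t ∪ {i})).card : ℚ) / (n : ℚ)

/-- Social welfare of a single coalition: `SW(C) = Σ_{i ∈ C} u_i(C)`. -/
def faSWC (n : ℕ) (F : Fin n → Finset (Fin n)) (C : Finset (Fin n)) : ℚ :=
  ∑ i ∈ C, faUtil n (F i) i C

/-- Social welfare of a partition of the agents (`SW(π) = Σ_i u_i(π(i))`). -/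
def faSW (n : ℕ) (F : Fin n → Finset (Fin n))
    (π : Finpartition (univ : Finset (Fin n))) : ℚ :=
  ∑ C ∈ π.parts, faSWC n F C

namespace Finpartition

variable {α : Type*} [DistribLattice α] [OrderBot α] [DecidableEq α] {a : α}

theorem disjoint_sup_sup_sdiff (P : Finpartition a) {T : Finset α} (hT : T ⊆ P.parts) :
    Disjoint (T.sup id) ((P.parts \ T).sup id) :=
  P.supIndep.disjoint_sup_sup hT sdiff_subset disjoint_sdiff

/-- Merges the parts in `T` into the single part `T.sup id`; `ofErase` discards it when
`T = ∅`. -/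
def mergeParts (P : Finpartition a) (T : Finset α) (hT : T ⊆ P.parts) : Finpartition a :=
  ofErase (insert (T.sup id) (P.parts \ T))
    ((P.supIndep.subset sdiff_subset).insert (P.disjoint_sup_sup_sdiff hT))
    (by rw [sup_insert, id, ← sup_union, union_sdiff_of_subset hT, P.sup_parts])

theorem sup_notMem_parts_sdiff (P : Finpartition a) {T : Finset α} (hT : T ⊆ P.parts) :
    T.sup id ∉ P.parts \ T := by
  intro hmem
  have hbot := (P.disjoint_sup_sup_sdiff hT).mono_right (le_sup (f := id) hmem)
  exact P.bot_notMem (disjoint_self.mp hbot ▸ (mem_sdiff.mp hmem).1)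

theorem sum_mergeParts {M : Type*} [AddCommMonoid M] (P : Finpartition a) {T : Finset α}
    (hT : T ⊆ P.parts) {f : α → M} (hf : f ⊥ = 0) :
    ∑ p ∈ (P.mergeParts T hT).parts, f p = f (T.sup id) + ∑ p ∈ P.parts \ T, f p := by
  rw [mergeParts, ofErase_parts, sum_erase _ hf, sum_insert (P.sup_notMem_parts_sdiff hT)]

theorem apply_sup_le_sum_of_forall_sum_le {M : Type*} [AddCommMonoid M] [PartialOrder M]
    [IsOrderedCancelAddMonoid M] (P : Finpartition a) {T : Finset α} (hT : T ⊆ P.parts)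
    {f : α → M} (hf : f ⊥ = 0)
    (hP : ∀ Q : Finpartition a, ∑ p ∈ Q.parts, f p ≤ ∑ p ∈ P.parts, f p) :
    f (T.sup id) ≤ ∑ p ∈ T, f p := by
  have h := hP (P.mergeParts T hT)
  rw [sum_mergeParts P hT hf, ← sum_sdiff hT, add_comm (∑ p ∈ P.parts \ T, f p)] at h
  exact le_of_add_le_add_right h

end Finpartition

theorem stmt18_general (n : ℕ) (F : Fin n → Finset (Fin n))
    (π : Finpartition (univ : Finset (Fin n)))
    (hopt : ∀ σ : Finpartition (univ : Finset (Fin n)), faSW n F σ ≤ faSW n F π)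
    (m : ℕ) (C : Fin m → Finset (Fin n))
    (hC : ∀ l, C l ∈ π.parts) (hinj : Function.Injective C) :
    faSWC n F (Finset.univ.biUnion C) ≤ ∑ l, faSWC n F (C l) := by
  have hT : univ.image C ⊆ π.parts := image_subset_iff.mpr fun l _ => hC l
  have key := π.apply_sup_le_sum_of_forall_sum_le hT (f := faSWC n F) (by simp [faSWC]) hopt
  rwa [sup_image, Function.id_comp, sup_eq_biUnion, sum_image fun _ _ _ _ h => hinj h] at key

/-- No positive cut: merging any `m ≥ 2` pairwise distinct coalitions of an optimal
partition does not increase the social welfare: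
`SW(C¹ ∪ … ∪ Cᵐ) ≤ SW(C¹) + … + SW(Cᵐ)`. -/
theorem stmt18 (n : ℕ) (hn : 0 < n) (F : Fin n → Finset (Fin n)) (hF : ∀ j, j ∉ F j)
    (π : Finpartition (univ : Finset (Fin n)))
    (hopt : ∀ σ : Finpartition (univ : Finset (Fin n)), faSW n F σ ≤ faSW n F π)
    (m : ℕ) (hm : 2 ≤ m) (C : Fin m → Finset (Fin n))
    (hC : ∀ l, C l ∈ π.parts) (hinj : Function.Injective C) :
    faSWC n F (Finset.univ.biUnion C) ≤ ∑ l, faSWC n F (C l) :=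
  stmt18_general n F π hopt m C hC hinj
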